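/- Let G ⊆ ℝ be a convex set. Let Q ≥ 1 and let ω_1, …, ω_Q > 0 satisfy Σ_{ℓ=1}^Q ω_ℓ = 1. Let α_x, α_y, h_x, h_y > 0 and set λ₁ = α_x/h_x, λ₂ = α_y/h_y. Let ω̄⋆ satisfy 0 < ω̄⋆ ≤ 1/2, set ω̂_x = ω̄⋆·λ₁/(λ₁ + λ₂) and ω̂_y = ω̄⋆·λ₂/(λ₁ + λ₂), and let Δt ≥ 0 satisfy the CFL condition Δt·(λ₁ + λ₂) ≤ ω̄⋆. Let f̂, ĝ : ℝ × ℝ → ℝ be numerical fluxes with the bound-preserving property: for all u₁, u₂, u₃ ∈ G and all μ ≥ 0 with μ·α_x ≤ 1 one has u₂ − μ·(f̂(u₂, u₃) − f̂(u₁, u₂)) ∈ G, and for all u₁, u₂, u₃ ∈ G and all μ ≥ 0 with μ·α_y ≤ 1 one has u₂ − μ·(ĝ(u₂, u₃) − ĝ(u₁, u₂)) ∈ G. Suppose given interface trace values a_ℓ, b_ℓ, c_ℓ, d_ℓ ∈ G and a′_ℓ, b′_ℓ, c′_ℓ, d′_ℓ ∈ G for 1 ≤ ℓ ≤ Q, and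 a value Γ ∈ G, and define the cell average ū = Σ_ℓ ω_ℓ·(ω̂_x·(b_ℓ + c_ℓ) + ω̂_y·(b′_ℓ + c′_ℓ)) + (1 − 2ω̄⋆)·Γ. Then the updated cell average ū⁺ = ū − (Δt/h_x)·Σ_ℓ ω_ℓ·(f̂(c_ℓ, d_ℓ) − f̂(a_ℓ, b_ℓ)) − (Δt/h_y)·Σ_ℓ ω_ℓ·(ĝ(c′_ℓ, d′_ℓ) − ĝ(a′_ℓ, b′_ℓ)) belongs to G. -/

import Mathlib

/-- **Theorem 2.13 of the paper (bound preservation of the 2D OE-HWENO scheme via the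
optimal cell average decomposition)**.  Let `G ⊆ ℝ` be convex, let `ω_ℓ > 0` be
quadrature weights summing to 1, set `λ₁ = α_x/h_x`, `λ₂ = α_y/h_y`,
`ω̂_x = ω̄⋆·λ₁/(λ₁+λ₂)`, `ω̂_y = ω̄⋆·λ₂/(λ₁+λ₂)` with `0 < ω̄⋆ ≤ 1/2`, and assume
the CFL condition `Δt(λ₁+λ₂) ≤ ω̄⋆`.  Suppose the numerical fluxes `f̂, ĝ` have the
bound-preserving property for three-point first-order updates in `G` under the
respective CFL conditions `μα_x ≤ 1`, `μα_y ≤ 1`.  If the interface trace values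
`a_ℓ, b_ℓ, c_ℓ, d_ℓ` (x-direction) and `a'_ℓ, b'_ℓ, c'_ℓ, d'_ℓ` (y-direction) and the
decomposition remainder `Γ` all lie in `G`, and the cell average admits the optimal
decomposition `ū = Σ_ℓ ω_ℓ(ω̂_x(b_ℓ + c_ℓ) + ω̂_y(b'_ℓ + c'_ℓ)) + (1 - 2ω̄⋆)Γ`, then
the forward-Euler updated cell average belongs to `G`. -/
theorem ocad_bound_preserving_2d
    (G : Set ℝ) (hG : Convex ℝ G)
    (Q : ℕ) (hQ : 1 ≤ Q) (ω : Fin Q → ℝ)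
    (hω : ∀ ℓ, 0 < ω ℓ) (hωsum : ∑ ℓ, ω ℓ = 1)
    (αx αy hx hy : ℝ) (hαx : 0 < αx) (hαy : 0 < αy) (hhx : 0 < hx) (hhy : 0 < hy)
    (ωstar : ℝ) (hωstar : 0 < ωstar) (hωstar' : ωstar ≤ 1 / 2)
    (Δt : ℝ) (hΔt : 0 ≤ Δt)
    (hcfl : Δt * (αx / hx + αy / hy) ≤ ωstar)
    (fhat ghat : ℝ → ℝ → ℝ)
    (hfbp : ∀ u₁ ∈ G, ∀ u₂ ∈ G, ∀ u₃ ∈ G, ∀ μ : ℝ, 0 ≤ μ → μ * αx ≤ 1 →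
      u₂ - μ * (fhat u₂ u₃ - fhat u₁ u₂) ∈ G)
    (hgbp : ∀ u₁ ∈ G, ∀ u₂ ∈ G, ∀ u₃ ∈ G, ∀ μ : ℝ, 0 ≤ μ → μ * αy ≤ 1 →
      u₂ - μ * (ghat u₂ u₃ - ghat u₁ u₂) ∈ G)
    (a b c d a' b' c' d' : Fin Q → ℝ)
    (ha : ∀ ℓ, a ℓ ∈ G) (hb : ∀ ℓ, b ℓ ∈ G) (hc : ∀ ℓ, c ℓ ∈ G) (hd : ∀ ℓ, d ℓ ∈ G)
    (ha' : ∀ ℓ, a' ℓ ∈ G) (hb' : ∀ ℓ, b' ℓ ∈ G) (hc' : ∀ ℓ, c' ℓ ∈ G)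
    (hd' : ∀ ℓ, d' ℓ ∈ G)
    (Γ : ℝ) (hΓ : Γ ∈ G)
    (ubar : ℝ)
    (hdecomp : ubar =
      (∑ ℓ, ω ℓ * ((ωstar * (αx / hx) / (αx / hx + αy / hy)) * (b ℓ + c ℓ)
        + (ωstar * (αy / hy) / (αx / hx + αy / hy)) * (b' ℓ + c' ℓ)))
        + (1 - 2 * ωstar) * Γ) :
    ubar - (Δt / hx) * (∑ ℓ, ω ℓ * (fhat (c ℓ) (d ℓ) - fhat (a ℓ) (b ℓ)))
      - (Δt / hy) * (∑ ℓ, ω ℓ * (ghat (c' ℓ) (d' ℓ) - ghat (a' ℓ) (b' ℓ))) ∈ G := by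
  set l1 := αx / hx with hl1
  set l2 := αy / hy with hl2
  have hl1p : 0 < l1 := div_pos hαx hhx
  have hl2p : 0 < l2 := div_pos hαy hhy
  have hsp : 0 < l1 + l2 := by linarith
  set wx := ωstar * l1 / (l1 + l2) with hwx
  set wy := ωstar * l2 / (l1 + l2) with hwy
  have hwxp : 0 < wx := div_pos (mul_pos hωstar hl1p) hsp
  have hwyp : 0 < wy := div_pos (mul_pos hωstar hl2p) hsp
  have hwsum : wx + wy = ωstar := by
    rw [hwx, hwy]
    field_simp
  set μx := Δt / (hx * wx) with hμx
  set μy := Δt / (hy * wy) with hμy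
  have hμxp : 0 ≤ μx := div_nonneg hΔt (le_of_lt (mul_pos hhx hwxp))
  have hμyp : 0 ≤ μy := div_nonneg hΔt (le_of_lt (mul_pos hhy hwyp))
  have hμxc : μx * αx ≤ 1 := by
    have e : μx * αx = Δt * (l1 + l2) / ωstar := by
      rw [hμx, hwx, hl1]
      field_simp
    rw [e, div_le_one hωstar]
    exact hcfl
  have hμyc : μy * αy ≤ 1 := by
    have e : μy * αy = Δt * (l1 + l2) / ωstar := by
      rw [hμy, hwy, hl2]
      field_simp
    rw [e, div_le_one hωstar]
    exact hcfl
  -- pointwise first-order updates lie in G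
  have hP1 : ∀ ℓ, b ℓ - μx * (fhat (b ℓ) (c ℓ) - fhat (a ℓ) (b ℓ)) ∈ G :=
    fun ℓ => hfbp _ (ha ℓ) _ (hb ℓ) _ (hc ℓ) μx hμxp hμxc
  have hP2 : ∀ ℓ, c ℓ - μx * (fhat (c ℓ) (d ℓ) - fhat (b ℓ) (c ℓ)) ∈ G :=
    fun ℓ => hfbp _ (hb ℓ) _ (hc ℓ) _ (hd ℓ) μx hμxp hμxc
  have hP3 : ∀ ℓ, b' ℓ - μy * (ghat (b' ℓ) (c' ℓ) - ghat (a' ℓ) (b' ℓ)) ∈ G :=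
    fun ℓ => hgbp _ (ha' ℓ) _ (hb' ℓ) _ (hc' ℓ) μy hμyp hμyc
  have hP4 : ∀ ℓ, c' ℓ - μy * (ghat (c' ℓ) (d' ℓ) - ghat (b' ℓ) (c' ℓ)) ∈ G :=
    fun ℓ => hgbp _ (hb' ℓ) _ (hc' ℓ) _ (hd' ℓ) μy hμyp hμyc
  set m : Fin Q → ℝ := fun ℓ =>
    (wx / ωstar) * ((b ℓ + c ℓ - μx * (fhat (c ℓ) (d ℓ) - fhat (a ℓ) (b ℓ))) / 2)
    + (wy / ωstar) * ((b' ℓ + c' ℓ - μy * (ghat (c' ℓ) (d' ℓ) - ghat (a' ℓ) (b' ℓ))) / 2)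
    with hm
  have hmG : ∀ ℓ, m ℓ ∈ G := by
    intro ℓ
    have hmidx : (b ℓ + c ℓ - μx * (fhat (c ℓ) (d ℓ) - fhat (a ℓ) (b ℓ))) / 2 ∈ G := by
      have := hG (hP1 ℓ) (hP2 ℓ) (by norm_num : (0:ℝ) ≤ 1/2) (by norm_num : (0:ℝ) ≤ 1/2)
        (by norm_num)
      convert this using 1
      simp only [smul_eq_mul]
      ring
    have hmidy : (b' ℓ + c' ℓ - μy * (ghat (c' ℓ) (d' ℓ) - ghat (a' ℓ) (b' ℓ))) / 2 ∈ G := by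
      have := hG (hP3 ℓ) (hP4 ℓ) (by norm_num : (0:ℝ) ≤ 1/2) (by norm_num : (0:ℝ) ≤ 1/2)
        (by norm_num)
      convert this using 1
      simp only [smul_eq_mul]
      ring
    have h1 : 0 ≤ wx / ωstar := le_of_lt (div_pos hwxp hωstar)
    have h2 : 0 ≤ wy / ωstar := le_of_lt (div_pos hwyp hωstar)
    have h3 : wx / ωstar + wy / ωstar = 1 := by
      rw [← add_div, hwsum, div_self (ne_of_gt hωstar)]
    have := hG hmidx hmidy h1 h2 h3
    simpa [hm, smul_eq_mul] using this
  have hMG : (∑ ℓ, ω ℓ * m ℓ) ∈ G := by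
    have := hG.sum_mem (t := Finset.univ) (fun i _ => le_of_lt (hω i)) hωsum
      (fun i _ => hmG i)
    simpa [smul_eq_mul] using this
  have hfin := hG hMG hΓ (by positivity : (0:ℝ) ≤ 2 * ωstar)
    (by linarith : (0:ℝ) ≤ 1 - 2 * ωstar) (by ring)
  simp only [smul_eq_mul] at hfin
  have e1 : wx * μx = Δt / hx := by
    rw [hμx]
    field_simp
  have e2 : wy * μy = Δt / hy := by
    rw [hμy]
    field_simp
  have key : ubar - (Δt / hx) * (∑ ℓ, ω ℓ * (fhat (c ℓ) (d ℓ) - fhat (a ℓ) (b ℓ)))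
      - (Δt / hy) * (∑ ℓ, ω ℓ * (ghat (c' ℓ) (d' ℓ) - ghat (a' ℓ) (b' ℓ)))
      = (∑ ℓ, 2 * ωstar * (ω ℓ * m ℓ)) + (1 - 2 * ωstar) * Γ := by
    rw [hdecomp]
    rw [Finset.mul_sum, Finset.mul_sum]
    have hterm : ∀ ℓ : Fin Q,
        ω ℓ * (wx * (b ℓ + c ℓ) + wy * (b' ℓ + c' ℓ))
        - Δt / hx * (ω ℓ * (fhat (c ℓ) (d ℓ) - fhat (a ℓ) (b ℓ)))
        - Δt / hy * (ω ℓ * (ghat (c' ℓ) (d' ℓ) - ghat (a' ℓ) (b' ℓ)))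
        = 2 * ωstar * (ω ℓ * m ℓ) := by
      intro ℓ
      rw [hm]
      simp only []
      rw [← e1, ← e2]
      have hs : ωstar ≠ 0 := ne_of_gt hωstar
      field_simp
      ring
    calc (∑ ℓ, ω ℓ * (wx * (b ℓ + c ℓ) + wy * (b' ℓ + c' ℓ))) + (1 - 2 * ωstar) * Γ
        - (∑ ℓ, Δt / hx * (ω ℓ * (fhat (c ℓ) (d ℓ) - fhat (a ℓ) (b ℓ))))
        - (∑ ℓ, Δt / hy * (ω ℓ * (ghat (c' ℓ) (d' ℓ) - ghat (a' ℓ) (b' ℓ))))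
        = (∑ ℓ, (ω ℓ * (wx * (b ℓ + c ℓ) + wy * (b' ℓ + c' ℓ))
            - Δt / hx * (ω ℓ * (fhat (c ℓ) (d ℓ) - fhat (a ℓ) (b ℓ)))
            - Δt / hy * (ω ℓ * (ghat (c' ℓ) (d' ℓ) - ghat (a' ℓ) (b' ℓ)))))
            + (1 - 2 * ωstar) * Γ := by
          rw [Finset.sum_sub_distrib, Finset.sum_sub_distrib]
          ring
      _ = (∑ ℓ, 2 * ωstar * (ω ℓ * m ℓ)) + (1 - 2 * ωstar) * Γ := by
          rw [Finset.sum_congr rfl (fun ℓ _ => hterm ℓ)]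
  rw [key]
  rw [Finset.mul_sum] at hfin
  exact hfin
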